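/- Let α > -1, γ ∈ (-1,∞)^d, and let 𝒱_k^{α,γ} denote the space of polynomials of degree k orthogonal to all polynomials of degree ≤ k-1 in L²(B^d, W_{α,γ}). If p_k ∈ 𝒱_k^{α+1,γ}, then the polynomial x ↦ (1-‖x‖²) p_k(x) belongs to 𝒱_k^{α,γ} ⊕ 𝒱_{k+2}^{α,γ}. -/

import Mathlib

open MeasureTheory Metric

noncomputable section

/-- Euclidean space ℝ^d. -/
abbrev E (d : ℕ) := EuclideanSpace ℝ (Fin d)

/-- The reflection flipping the sign of the j-th coordinate. -/
def reflCoord {d : ℕ} (j : Fin d) (x : E d) : E d := WithLp.toLp 2 (fun i => if i = j then -x i else x i)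

/-- The j-th partial derivative. -/
def pd {d : ℕ} (j : Fin d) (f : E d → ℝ) (x : E d) : ℝ :=
  fderiv ℝ f x (EuclideanSpace.single j 1)

/-- The difference quotient ρ_j(f)(x) = (f(x) - f(σ_j x))/x_j, extended by 2 ∂_j f(x)
on the hyperplane {x_j = 0}. -/
def rho {d : ℕ} (j : Fin d) (f : E d → ℝ) (x : E d) : ℝ :=
  if x j = 0 then 2 * pd j f x else (f x - f (reflCoord j x)) / x j

/-- The Dunkl operator 𝒟_j^γ. -/
def dunkl {d : ℕ} (γ : Fin d → ℝ) (j : Fin d) (f : E d → ℝ) (x : E d) : ℝ :=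
  pd j f x + γ j / 2 * rho j f x

/-- The weight W_{α,γ}(x) = (1-‖x‖²)^α ∏ |x_i|^{γ_i}. -/
def W {d : ℕ} (α : ℝ) (γ : Fin d → ℝ) (x : E d) : ℝ :=
  (1 - ‖x‖ ^ 2) ^ α * ∏ i, |x i| ^ (γ i)

/-- The weighted inner product ⟨u,v⟩_{α,γ} = ∫_{B^d} u v W_{α,γ}. -/
def ip {d : ℕ} (α : ℝ) (γ : Fin d → ℝ) (u v : E d → ℝ) : ℝ :=
  ∫ x in ball (0 : E d) 1, u x * v x * W α γ x

/-- Evaluation of a d-variate polynomial as a function on E d. -/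
def evalP {d : ℕ} (p : MvPolynomial (Fin d) ℝ) (x : E d) : ℝ :=
  MvPolynomial.eval (fun i => x i) p

/-- Membership in the orthogonal polynomial space 𝒱_k^{α,γ}: a polynomial of total
degree ≤ k that is ⟨·,·⟩_{α,γ}-orthogonal to all polynomials of total degree < k. -/
def memV {d : ℕ} (α : ℝ) (γ : Fin d → ℝ) (k : ℕ) (f : E d → ℝ) : Prop :=
  (∃ p : MvPolynomial (Fin d) ℝ, p.totalDegree ≤ k ∧ f = evalP p) ∧
  ∀ q : MvPolynomial (Fin d) ℝ, q.totalDegree < k → ip α γ f (evalP q) = 0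

/-- The adjoint (parameter-lowering) operator 𝒟_j^{α,γ;⋆}. -/
def dunklStar {d : ℕ} (α : ℝ) (γ : Fin d → ℝ) (j : Fin d) (f : E d → ℝ) (x : E d) : ℝ :=
  -(1 - ‖x‖ ^ 2) * dunkl γ j f x + 2 * (α + 1) * x j * f x

/-- The generalized angular derivative 𝒟_{i,j}^γ = x_i 𝒟_j^γ - x_j 𝒟_i^γ. -/
def dunklAng {d : ℕ} (γ : Fin d → ℝ) (i j : Fin d) (f : E d → ℝ) (x : E d) : ℝ :=
  x i * dunkl γ j f x - x j * dunkl γ i f x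

/-- λ^{α,γ} = α + (Σ γ_i)/2 + d/2. -/
def lam (d : ℕ) (α : ℝ) (γ : Fin d → ℝ) : ℝ := α + (∑ i, γ i) / 2 + d / 2

/-- Iterate of a single Dunkl operator. -/
def dunklPow {d : ℕ} (γ : Fin d → ℝ) (j : Fin d) : ℕ → (E d → ℝ) → E d → ℝ
  | 0, f => f
  | n + 1, f => dunkl γ j (dunklPow γ j n f)

/-- Iterated Dunkl operator 𝒟_a^γ for a multi-index a. -/
def dunklMulti {d : ℕ} (γ : Fin d → ℝ) (a : Fin d → ℕ) (f : E d → ℝ) : E d → ℝ :=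
  (List.finRange d).foldr (fun j g => dunklPow γ j (a j) g) f

/-- Iterate of a single partial derivative. -/
def pdPow {d : ℕ} (j : Fin d) : ℕ → (E d → ℝ) → E d → ℝ
  | 0, f => f
  | n + 1, f => pd j (pdPow j n f)

/-- Iterated partial derivative ∂_a for a multi-index a. -/
def pdMulti {d : ℕ} (a : Fin d → ℕ) (f : E d → ℝ) : E d → ℝ :=
  (List.finRange d).foldr (fun j g => pdPow j (a j) g) f

/-- The operator x·∇. -/
def xdel {d : ℕ} (u : E d → ℝ) (x : E d) : ℝ := ∑ i, x i * pd i u x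

/-- The Sturm–Liouville operator ℒ^{α,γ} = -Δ_h + (x·∇)² + 2λ^{α,γ} x·∇. -/
def Lop {d : ℕ} (α : ℝ) (γ : Fin d → ℝ) (u : E d → ℝ) (x : E d) : ℝ :=
  -(∑ i, dunkl γ i (dunkl γ i u) x) + xdel (xdel u) x + 2 * lam d α γ * xdel u x


/-!
Put `G = (1 - ‖x‖²) p`, so that `⟨G, q⟩_{α,γ} = ⟨p, q⟩_{α+1,γ}` for every polynomial `q`, and let
`F` be the `⟨·,·⟩_{α,γ}`-orthogonal projection of `G` onto `Π_k`. Then `F ∈ 𝒱_k^{α,γ}`, since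
`⟨F, q⟩_{α,γ} = ⟨p, q⟩_{α+1,γ} = 0` for `deg q < k`. To see `G - F ⊥ Π_{k+1}`, split `q` into its
monomials of degree `≡ k` and `≢ k (mod 2)`: the first part has degree `≤ k` and is taken care of
by the projection, the second is orthogonal to `p` (for `α + 1`) and to `F` (for `α`) by the
central symmetry of the weights. Definiteness of the forms is never needed: the part of
`U ∈ 𝒱_k` of the wrong parity has degree `< k`, so it is isotropic and lies in the radical.

Integrability of `W_{α,γ}` on the ball goes by induction on `d`: integrating out one coordinate
over `t² < 1 - ‖z‖²` and rescaling `t` by `√(1 - ‖z‖²)` turns `W_{α,γ}` into a constant multiple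
of `W_{α + (γ₀ + 1)/2, γ'}` in the remaining coordinates.
-/

open Set ENNReal

section WeightIntegrability

variable {α c : ℝ}

theorem intervalIntegrable_one_sub_sq_rpow_mul_abs_rpow (hα : -1 < α) (hc : -1 < c) :
    IntervalIntegrable (fun t : ℝ => (1 - t ^ 2) ^ α * |t| ^ c) volume (-1) 1 := by
  set f : ℝ → ℝ := fun t => (1 - t ^ 2) ^ α * |t| ^ c
  have near_zero : IntervalIntegrable f volume 0 (1 / 2) := by
    refine ((intervalIntegral.intervalIntegrable_rpow' hc).continuousOn_mul
      (g := fun t => (1 - t ^ 2) ^ α) ?_).congr fun t ht => ?_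
    · refine ContinuousOn.rpow_const (by fun_prop) fun t ht => Or.inl ?_
      rw [uIcc_of_le (by norm_num)] at ht
      nlinarith [ht.1, ht.2]
    · rw [uIoc_of_le (by norm_num)] at ht
      simp [f, abs_of_pos ht.1]
  have near_one : IntervalIntegrable f volume (1 / 2) 1 := by
    have h := ((intervalIntegral.intervalIntegrable_rpow' (a := 0) (b := 1 / 2) hα).comp_sub_left
      1).symm
    rw [show (1 : ℝ) - 1 / 2 = 1 / 2 by norm_num, sub_zero] at h
    refine (h.continuousOn_mul (g := fun t => (1 + t) ^ α * t ^ c) ?_).congr fun t ht => ?_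
    · exact ContinuousOn.mul
        (ContinuousOn.rpow_const (by fun_prop) fun t ht => Or.inl (by
          rw [uIcc_of_le (by norm_num)] at ht; linarith [ht.1]))
        (ContinuousOn.rpow_const (by fun_prop) fun t ht => Or.inl (by
          rw [uIcc_of_le (by norm_num)] at ht; linarith [ht.1]))
    · rw [uIoc_of_le (by norm_num)] at ht
      simp only [f, abs_of_pos (by linarith [ht.1] : (0 : ℝ) < t)]
      rw [show 1 - t ^ 2 = (1 + t) * (1 - t) by ring,
        Real.mul_rpow (by linarith [ht.1]) (by linarith [ht.2])]
      ring
  have nonneg_half := near_zero.trans near_one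
  have nonpos_half : IntervalIntegrable f volume (-1) 0 := by
    rw [IntervalIntegrable.iff_comp_neg]
    simpa [f] using nonneg_half.symm
  exact nonpos_half.trans nonneg_half

def sliceWeight (α c S : ℝ) : ℝ → ℝ≥0∞ :=
  {t | t ^ 2 < S}.indicator fun t => ENNReal.ofReal ((S - t ^ 2) ^ α * |t| ^ c)

theorem measurable_sliceWeight (α c S : ℝ) : Measurable (sliceWeight α c S) :=
  (Measurable.ennreal_ofReal (by fun_prop)).indicator
    (measurableSet_lt (by fun_prop) (by fun_prop))

theorem lintegral_sliceWeight_one_lt_top (hα : -1 < α) (hc : -1 < c) :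
    ∫⁻ t, sliceWeight α c 1 t < ∞ := by
  have hset : {t : ℝ | t ^ 2 < 1} = Ioo (-1) 1 := by
    ext t; simp [sq_lt_one_iff_abs_lt_one, abs_lt]
  rw [sliceWeight, lintegral_indicator (measurableSet_lt (by fun_prop) (by fun_prop)), hset]
  exact Integrable.lintegral_lt_top <| (intervalIntegrable_iff_integrableOn_Ioo_of_le
    (by norm_num)).mp (intervalIntegrable_one_sub_sq_rpow_mul_abs_rpow hα hc)

theorem lintegral_comp_mul_left_of_pos {a : ℝ} (ha : 0 < a) (f : ℝ → ℝ≥0∞) :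
    ∫⁻ t, f t = ENNReal.ofReal a * ∫⁻ s, f (a * s) := by
  have h := lintegral_map_equiv (μ := volume) f (Homeomorph.mulLeft₀ a ha.ne').toMeasurableEquiv
  simp only [Homeomorph.toMeasurableEquiv_coe, Homeomorph.coe_mulLeft₀] at h
  rw [← h, Real.map_volume_mul_left ha.ne', lintegral_smul_measure, smul_eq_mul, ← mul_assoc,
    ← ENNReal.ofReal_mul ha.le, abs_of_pos (inv_pos.mpr ha), mul_inv_cancel₀ ha.ne',
    ENNReal.ofReal_one, one_mul]

theorem lintegral_sliceWeight (α c S : ℝ) :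
    ∫⁻ t, sliceWeight α c S t =
      (if 0 < S then ENNReal.ofReal (S ^ (α + (c + 1) / 2)) else 0) *
        ∫⁻ s, sliceWeight α c 1 s := by
  split_ifs with hS
  · rw [lintegral_comp_mul_left_of_pos (Real.sqrt_pos.mpr hS), ← lintegral_const_mul' _ _
      ENNReal.ofReal_ne_top, ← lintegral_const_mul' _ _ ENNReal.ofReal_ne_top]
    congr 1 with s
    have hsq : (√S * s) ^ 2 = S * s ^ 2 := by rw [mul_pow, Real.sq_sqrt hS.le]
    simp only [sliceWeight, indicator, mem_ofPred_eq, hsq]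
    by_cases hs : s ^ 2 < 1
    · have hlt : S * s ^ 2 < S := by nlinarith
      rw [if_pos hlt, if_pos hs, ← ENNReal.ofReal_mul (Real.sqrt_nonneg _),
        ← ENNReal.ofReal_mul (by positivity)]
      congr 1
      rw [show S - S * s ^ 2 = S * (1 - s ^ 2) by ring, abs_mul,
        abs_of_pos (Real.sqrt_pos.mpr hS), Real.mul_rpow hS.le (by linarith),
        Real.mul_rpow (Real.sqrt_nonneg _) (abs_nonneg _), Real.sqrt_eq_rpow, ← Real.rpow_mul hS.le,
        show α + (c + 1) / 2 = 1 / 2 + (α + 1 / 2 * c) by ring, Real.rpow_add hS,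
        Real.rpow_add hS]
      ring
    · rw [if_neg (by nlinarith), if_neg hs, mul_zero, mul_zero]
  · have hzero : sliceWeight α c S = 0 := by
      ext t
      simp only [sliceWeight, indicator_apply_eq_zero, mem_ofPred_eq, Pi.zero_apply]
      intro ht
      nlinarith [sq_nonneg t]
    simp [hzero]

def ballWeight {n : ℕ} (α : ℝ) (γ : Fin n → ℝ) : (Fin n → ℝ) → ℝ≥0∞ :=
  {y | ∑ i, y i ^ 2 < 1}.indicator fun y =>
    ENNReal.ofReal ((1 - ∑ i, y i ^ 2) ^ α * ∏ i, |y i| ^ γ i)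

theorem measurable_ballWeight {n : ℕ} (α : ℝ) (γ : Fin n → ℝ) : Measurable (ballWeight α γ) :=
  (Measurable.ennreal_ofReal (by fun_prop)).indicator
    (measurableSet_lt (by fun_prop) (by fun_prop))

theorem ballWeight_cons {n : ℕ} (α : ℝ) (γ : Fin (n + 1) → ℝ) (t : ℝ) (z : Fin n → ℝ) :
    ballWeight α γ (Fin.cons t z) =
      ENNReal.ofReal (∏ i, |z i| ^ γ i.succ) * sliceWeight α (γ 0) (1 - ∑ i, z i ^ 2) t := by
  simp only [ballWeight, sliceWeight, indicator, mem_ofPred_eq, Fin.sum_univ_succ,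
    Fin.prod_univ_succ, Fin.cons_zero, Fin.cons_succ]
  by_cases h : t ^ 2 + ∑ i, z i ^ 2 < 1
  · rw [if_pos h, if_pos (by linarith), ← ENNReal.ofReal_mul (by positivity)]
    congr 1
    ring_nf
  · rw [if_neg h, if_neg (by linarith), mul_zero]

theorem lintegral_ballWeight_cons {n : ℕ} (α : ℝ) (γ : Fin (n + 1) → ℝ) (z : Fin n → ℝ) :
    ∫⁻ t, ballWeight α γ (Fin.cons t z) =
      ballWeight (α + (γ 0 + 1) / 2) (fun i => γ i.succ) z * ∫⁻ s, sliceWeight α (γ 0) 1 s := by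
  simp_rw [ballWeight_cons]
  rw [lintegral_const_mul' _ _ ENNReal.ofReal_ne_top, lintegral_sliceWeight, ← mul_assoc]
  congr 1
  simp only [ballWeight, indicator, mem_ofPred_eq, sub_pos]
  split_ifs
  · rw [← ENNReal.ofReal_mul (by positivity), mul_comm]
  · rw [mul_zero]

theorem lintegral_ballWeight_lt_top {n : ℕ} {α : ℝ} {γ : Fin n → ℝ} (hα : -1 < α)
    (hγ : ∀ i, -1 < γ i) : ∫⁻ y, ballWeight α γ y < ∞ := by
  induction n generalizing α with
  | zero => simp [ballWeight]
  | succ m ih =>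
    have e := (volume_preserving_piFinSuccAbove (fun _ : Fin (m + 1) => ℝ) 0).symm
    have hm : Measurable fun p => ballWeight α γ ((MeasurableEquiv.piFinSuccAbove _ 0).symm p) :=
      (measurable_ballWeight α γ).comp (MeasurableEquiv.measurable _)
    rw [← e.lintegral_comp_emb (MeasurableEquiv.measurableEmbedding _), Measure.volume_eq_prod,
      lintegral_prod_symm _ hm.aemeasurable]
    simp only [MeasurableEquiv.piFinSuccAbove_symm_apply, Fin.insertNthEquiv_zero,
      Fin.consEquiv, Equiv.coe_fn_mk, lintegral_ballWeight_cons]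
    rw [lintegral_mul_const _ (measurable_ballWeight _ _)]
    exact ENNReal.mul_lt_top (ih (by linarith [hγ 0]) fun i => hγ i.succ)
      (lintegral_sliceWeight_one_lt_top hα (hγ 0))

theorem norm_sq_eq_sum_sq {d : ℕ} (x : E d) : ‖x‖ ^ 2 = ∑ i, x i ^ 2 := by
  simp [EuclideanSpace.norm_sq_eq]

theorem integrableOn_W_ball {d : ℕ} {α : ℝ} {γ : Fin d → ℝ} (hα : -1 < α)
    (hγ : ∀ i, -1 < γ i) : IntegrableOn (W α γ) (ball (0 : E d) 1) := by
  have e := EuclideanSpace.volume_preserving_symm_measurableEquiv_toLp (Fin d)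
  have hW : (ball (0 : E d) 1).indicator (W α γ) =
      fun x => (ballWeight α γ ((MeasurableEquiv.toLp 2 (Fin d → ℝ)).symm x)).toReal := by
    ext x
    have hx : x ∈ ball (0 : E d) 1 ↔ ∑ i, x i ^ 2 < 1 := by
      rw [mem_ball_zero_iff, ← norm_sq_eq_sum_sq, sq_lt_one_iff₀ (norm_nonneg x)]
    simp only [ballWeight, indicator, hx, mem_ofPred_eq, W, norm_sq_eq_sum_sq,
      MeasurableEquiv.coe_toLp_symm]
    by_cases h : ∑ i, x i ^ 2 < 1
    · simp only [h, if_true]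
      exact (ENNReal.toReal_ofReal (mul_nonneg (Real.rpow_nonneg (sub_nonneg.mpr h.le) _)
        (Finset.prod_nonneg fun i _ => Real.rpow_nonneg (abs_nonneg _) _))).symm
    · simp [h]
  rw [← integrable_indicator_iff measurableSet_ball, hW]
  refine integrable_toReal_of_lintegral_ne_top
    ((measurable_ballWeight α γ).comp (MeasurableEquiv.measurable _)).aemeasurable ?_
  rw [e.lintegral_comp_emb (MeasurableEquiv.measurableEmbedding _)]
  exact (lintegral_ballWeight_lt_top hα hγ).ne

end WeightIntegrability

namespace LinearMap.BilinForm

variable {K M : Type*} [Field K] [LinearOrder K] [IsStrictOrderedRing K] [AddCommGroup M]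
  [Module K M] {B : LinearMap.BilinForm K M}

theorem exists_orthogonal_projection (hs : ∀ x, 0 ≤ B x x) (hB : B.IsSymm) (S : Submodule K M)
    [FiniteDimensional K S] (x : M) : ∃ y ∈ S, ∀ s ∈ S, B y s = B x s := by
  set A := B.domRestrict₁₂ S S
  have hA : A = A.dualMap ∘ₗ Module.Dual.eval K S := by
    ext u v
    exact hB.eq u v
  have hrange : LinearMap.range A = (LinearMap.ker A).dualAnnihilator := by
    rw [hA, LinearMap.range_comp_of_range_eq_top _
      (LinearMap.range_eq_top.mpr (Module.bijective_dual_eval K S).2),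
      LinearMap.range_dualMap_eq_dualAnnihilator_ker, ← hA]
  -- an isotropic vector of a semidefinite form lies in its radical, so `B x` vanishes on `ker A`
  have hx : (B x).domRestrict S ∈ LinearMap.range A := by
    rw [hrange, Submodule.mem_dualAnnihilator]
    intro w hw
    have hww : B w w = 0 := congrArg (fun f : Module.Dual K S => f w) (LinearMap.mem_ker.mp hw)
    rw [B.apply_apply_same_eq_zero_iff hs (isSymm_iff.mp hB), LinearMap.mem_ker] at hww
    simpa [hB.eq x w] using congrArg (fun f => f x) hww
  obtain ⟨y, hy⟩ := hx
  exact ⟨y, y.2, fun s hs => congrArg (fun f : Module.Dual K S => f ⟨s, hs⟩) hy⟩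

end LinearMap.BilinForm

namespace MvPolynomial

section Parity

variable {σ R : Type*} [CommRing R]

def negVars : MvPolynomial σ R →ₐ[R] MvPolynomial σ R := aeval fun i => -X i

theorem negVars_monomial (m : σ →₀ ℕ) (a : R) :
    negVars (monomial m a) = (-1 : R) ^ (m.sum fun _ e => e) • monomial m a := by
  have hX : ∀ (i : σ) (k : ℕ), (-X i : MvPolynomial σ R) ^ k = C ((-1) ^ k) * X i ^ k := by
    intro i k
    rw [neg_eq_neg_one_mul, mul_pow, map_pow, map_neg, map_one]
  rw [negVars, aeval_monomial, monomial_eq, Finsupp.prod, Finsupp.prod, Finsupp.sum,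
    Finset.prod_congr rfl fun i _ => hX i (m i), Finset.prod_mul_distrib, ← map_prod,
    Finset.prod_pow_eq_pow_sum, smul_eq_C_mul, algebraMap_eq]
  ring

def parityPart (n : ℕ) (P : MvPolynomial σ R) : MvPolynomial σ R :=
  ∑ m ∈ P.support with (m.sum fun _ e => e) % 2 = n % 2, monomial m (coeff m P)

theorem parityPart_add_parityPart_succ (n : ℕ) (P : MvPolynomial σ R) :
    parityPart n P + parityPart (n + 1) P = P := by
  have h : ∀ m : σ →₀ ℕ,
      (m.sum fun _ e => e) % 2 = (n + 1) % 2 ↔ ¬(m.sum fun _ e => e) % 2 = n % 2 := by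
    intro m; omega
  rw [parityPart, parityPart, Finset.filter_congr fun m _ => h m,
    Finset.sum_filter_add_sum_filter_not, support_sum_monomial_coeff]

theorem parityPart_add_two (n : ℕ) (P : MvPolynomial σ R) :
    parityPart (n + 2) P = parityPart n P := by
  simp [parityPart]

theorem negVars_parityPart (n : ℕ) (P : MvPolynomial σ R) :
    negVars (parityPart n P) = (-1 : R) ^ n • parityPart n P := by
  rw [parityPart, map_sum, Finset.smul_sum]
  refine Finset.sum_congr rfl fun m hm => ?_
  rw [negVars_monomial, neg_one_pow_eq_pow_mod_two, (Finset.mem_filter.mp hm).2,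
    ← neg_one_pow_eq_pow_mod_two]

theorem totalDegree_parityPart_le {n : ℕ} {P : MvPolynomial σ R} (h : P.totalDegree ≤ n + 1) :
    (parityPart n P).totalDegree ≤ n := by
  refine totalDegree_finsetSum_le fun m hm => (totalDegree_monomial_le _ _).trans ?_
  obtain ⟨hmP, hpar⟩ := Finset.mem_filter.mp hm
  have := (le_totalDegree hmP).trans h
  simp only [Function.id_def]
  omega

theorem parityPart_one_eq_zero {P : MvPolynomial σ R} (h : P.totalDegree = 0) :
    parityPart 1 P = 0 := by
  refine Finset.sum_eq_zero fun m hm => ?_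
  obtain ⟨hmP, hpar⟩ := Finset.mem_filter.mp hm
  have := (le_totalDegree hmP).trans h.le
  omega

end Parity

section SymmetricForm

variable {σ K : Type*} [Field K] [LinearOrder K] [IsStrictOrderedRing K]
  {B : LinearMap.BilinForm K (MvPolynomial σ K)}

theorem apply_parityPart_parityPart_succ (hneg : ∀ P Q, B (negVars P) (negVars Q) = B P Q)
    (n : ℕ) (P Q : MvPolynomial σ K) : B (parityPart n P) (parityPart (n + 1) Q) = 0 := by
  have h := hneg (parityPart n P) (parityPart (n + 1) Q)
  have hsign : (-1 : K) ^ n * (-1) ^ (n + 1) = -1 := by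
    rw [← pow_add, show n + (n + 1) = 2 * n + 1 by ring, pow_succ, pow_mul]
    simp
  simp only [negVars_parityPart, map_smul, LinearMap.smul_apply, smul_eq_mul] at h
  linear_combination (-1 / 2 : K) * h + (B (parityPart n P) (parityPart (n + 1) Q) / 2) * hsign

theorem apply_parityPart_succ_eq_zero (hs : ∀ P, 0 ≤ B P P) (hB : B.IsSymm)
    (hneg : ∀ P Q, B (negVars P) (negVars Q) = B P Q) {k : ℕ} {U : MvPolynomial σ K}
    (hU : U.totalDegree ≤ k) (horth : ∀ Q : MvPolynomial σ K, Q.totalDegree < k → B U Q = 0)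
    (Q : MvPolynomial σ K) : B U (parityPart (k + 1) Q) = 0 := by
  have hker : parityPart (k + 1) U ∈ LinearMap.ker B := by
    rw [← B.apply_apply_same_eq_zero_iff hs (LinearMap.BilinForm.isSymm_iff.mp hB)]
    rcases k with _ | j
    · simp [parityPart_one_eq_zero (Nat.le_zero.mp hU)]
    · set U' := parityPart (j + 1 + 1) U
      have hdeg : U'.totalDegree < j + 1 := by
        have := totalDegree_parityPart_le (n := j) hU
        rw [← parityPart_add_two] at this
        exact Nat.lt_succ_of_le this
      have hU' : U' = U - parityPart (j + 1) U :=
        eq_sub_of_add_eq' (parityPart_add_parityPart_succ (j + 1) U)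
      rw [show B U' U' = B (U - parityPart (j + 1) U) U' by rw [← hU'], map_sub,
        LinearMap.sub_apply, horth _ hdeg, apply_parityPart_parityPart_succ hneg, sub_zero]
  rw [← parityPart_add_parityPart_succ k U, map_add, LinearMap.add_apply,
    apply_parityPart_parityPart_succ hneg, LinearMap.mem_ker.mp hker, LinearMap.zero_apply,
    add_zero]

theorem exists_orthogonal_decomposition [Finite σ] (hs : ∀ P, 0 ≤ B P P) (hB : B.IsSymm)
    (hneg : ∀ P Q, B (negVars P) (negVars Q) = B P Q) {k : ℕ} {G : MvPolynomial σ K}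
    (hG : ∀ Q : MvPolynomial σ K, Q.totalDegree < k → B G Q = 0)
    (hGodd : ∀ Q : MvPolynomial σ K, B G (parityPart (k + 1) Q) = 0) :
    ∃ F : MvPolynomial σ K, F.totalDegree ≤ k ∧
      (∀ Q : MvPolynomial σ K, Q.totalDegree < k → B F Q = 0) ∧
      ∀ Q : MvPolynomial σ K, Q.totalDegree < k + 2 → B (G - F) Q = 0 := by
  obtain ⟨F, hFdeg, hFG⟩ := B.exists_orthogonal_projection hs hB (restrictTotalDegree σ K k) G
  rw [mem_restrictTotalDegree] at hFdeg
  replace hFG (Q : MvPolynomial σ K) (hQ : Q.totalDegree ≤ k) : B F Q = B G Q :=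
    hFG Q ((mem_restrictTotalDegree _ _ _).mpr hQ)
  have hForth (Q : MvPolynomial σ K) (hQ : Q.totalDegree < k) : B F Q = 0 :=
    (hFG Q hQ.le).trans (hG Q hQ)
  refine ⟨F, hFdeg, hForth, fun Q hQ => ?_⟩
  rw [← parityPart_add_parityPart_succ k Q, map_add, map_sub, LinearMap.sub_apply,
    LinearMap.sub_apply, hFG _ (totalDegree_parityPart_le (by omega)), hGodd,
    apply_parityPart_succ_eq_zero hs hB hneg hFdeg hForth, sub_self, sub_zero, add_zero]

end SymmetricForm

end MvPolynomial

section WeightedForm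

open MvPolynomial

variable {d : ℕ} {α : ℝ} {γ : Fin d → ℝ}

theorem continuous_evalP (P : MvPolynomial (Fin d) ℝ) : Continuous (evalP P) :=
  (continuous_eval P).comp (PiLp.continuous_ofLp 2 _)

theorem evalP_negVars (P : MvPolynomial (Fin d) ℝ) (x : E d) :
    evalP (negVars P) x = evalP P (-x) := by
  induction P using MvPolynomial.induction_on <;> simp_all [evalP, negVars]

theorem W_nonneg {x : E d} (hx : x ∈ ball (0 : E d) 1) : 0 ≤ W α γ x := by
  have : ‖x‖ < 1 := mem_ball_zero_iff.mp hx
  exact mul_nonneg (Real.rpow_nonneg (by nlinarith [norm_nonneg x]) _)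
    (Finset.prod_nonneg fun i _ => Real.rpow_nonneg (abs_nonneg _) _)

theorem W_neg (x : E d) : W α γ (-x) = W α γ x := by
  simp [W, PiLp.neg_apply, abs_neg]

theorem integrableOn_evalP_mul_evalP_mul_W (hW : IntegrableOn (W α γ) (ball (0 : E d) 1))
    (P Q : MvPolynomial (Fin d) ℝ) :
    IntegrableOn (fun x => evalP P x * evalP Q x * W α γ x) (ball (0 : E d) 1) :=
  IntegrableOn.continuousOn_mul_of_subset
    ((continuous_evalP P).mul (continuous_evalP Q)).continuousOn hW (isCompact_closedBall 0 1)
    measurableSet_ball ball_subset_closedBall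

def ipForm (hW : IntegrableOn (W α γ) (ball (0 : E d) 1)) :
    LinearMap.BilinForm ℝ (MvPolynomial (Fin d) ℝ) :=
  LinearMap.mk₂ ℝ (fun P Q => ip α γ (evalP P) (evalP Q))
    (fun P P' Q => by
      simp only [ip, evalP, map_add, add_mul]
      exact integral_add (integrableOn_evalP_mul_evalP_mul_W hW P Q)
        (integrableOn_evalP_mul_evalP_mul_W hW P' Q))
    (fun c P Q => by simp only [ip, evalP, smul_eval, smul_eq_mul, mul_assoc, integral_const_mul])
    (fun P Q Q' => by
      simp only [ip, evalP, map_add, mul_add, add_mul]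
      exact integral_add (integrableOn_evalP_mul_evalP_mul_W hW P Q)
        (integrableOn_evalP_mul_evalP_mul_W hW P Q'))
    (fun c P Q => by
      simp only [ip, evalP, smul_eval, smul_eq_mul, mul_left_comm _ c, mul_assoc,
        integral_const_mul])

variable {hW : IntegrableOn (W α γ) (ball (0 : E d) 1)}

theorem ipForm_apply (P Q : MvPolynomial (Fin d) ℝ) :
    ipForm hW P Q = ip α γ (evalP P) (evalP Q) := rfl

theorem ipForm_isSymm : (ipForm hW).IsSymm :=
  ⟨fun P Q => by simp only [ipForm_apply, ip, mul_comm (evalP P _)]⟩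

theorem ipForm_self_nonneg (P : MvPolynomial (Fin d) ℝ) : 0 ≤ ipForm hW P P :=
  setIntegral_nonneg measurableSet_ball fun _ hx => mul_nonneg (mul_self_nonneg _) (W_nonneg hx)

theorem ipForm_negVars (P Q : MvPolynomial (Fin d) ℝ) :
    ipForm hW (negVars P) (negVars Q) = ipForm hW P Q := by
  have h := (Measure.measurePreserving_neg (volume : Measure (E d))).setIntegral_preimage_emb
    (Homeomorph.neg (E d)).measurableEmbedding (fun x => evalP P x * evalP Q x * W α γ x)
    (ball 0 1)
  simp only [Set.neg_preimage, neg_ball, neg_zero, W_neg] at h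
  simpa only [ipForm_apply, ip, evalP_negVars] using h

def oneSubNormSq : MvPolynomial (Fin d) ℝ := 1 - ∑ i, X i ^ 2

theorem evalP_oneSubNormSq_mul (P : MvPolynomial (Fin d) ℝ) (x : E d) :
    evalP (oneSubNormSq * P) x = (1 - ‖x‖ ^ 2) * evalP P x := by
  simp [oneSubNormSq, evalP, norm_sq_eq_sum_sq]

theorem totalDegree_oneSubNormSq_mul_le {k : ℕ} {P : MvPolynomial (Fin d) ℝ}
    (hP : P.totalDegree ≤ k) : (oneSubNormSq * P).totalDegree ≤ k + 2 := by
  have h : (oneSubNormSq : MvPolynomial (Fin d) ℝ).totalDegree ≤ 2 :=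
    (totalDegree_sub _ _).trans <| max_le (by simp) <|
      totalDegree_finsetSum_le fun i _ => (totalDegree_X_pow i 2).le
  linarith [totalDegree_mul oneSubNormSq P]

theorem ipForm_oneSubNormSq_mul {hW₁ : IntegrableOn (W (α + 1) γ) (ball (0 : E d) 1)}
    (P Q : MvPolynomial (Fin d) ℝ) : ipForm hW (oneSubNormSq * P) Q = ipForm hW₁ P Q := by
  refine setIntegral_congr_fun measurableSet_ball fun x hx => ?_
  have hpos : 0 < 1 - ‖x‖ ^ 2 := by
    have : ‖x‖ < 1 := mem_ball_zero_iff.mp hx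
    nlinarith [norm_nonneg x]
  simp only [evalP_oneSubNormSq_mul, W, Real.rpow_add_one hpos.ne']
  ring

theorem memV_evalP {k : ℕ} {P : MvPolynomial (Fin d) ℝ} (hdeg : P.totalDegree ≤ k)
    (horth : ∀ Q : MvPolynomial (Fin d) ℝ, Q.totalDegree < k → ipForm hW P Q = 0) :
    memV α γ k (evalP P) :=
  ⟨⟨P, hdeg, rfl⟩, horth⟩

end WeightedForm

theorem stmt8 (d : ℕ) (α : ℝ) (hα : -1 < α) (γ : Fin d → ℝ) (hγ : ∀ i, -1 < γ i)
    (k : ℕ) (p : E d → ℝ) (hp : memV (α + 1) γ k p) :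
    ∃ f₁ f₂ : E d → ℝ, memV α γ k f₁ ∧ memV α γ (k + 2) f₂ ∧
      ∀ x : E d, (1 - ‖x‖ ^ 2) * p x = f₁ x + f₂ x := by
  obtain ⟨⟨P, hPdeg, rfl⟩, hPorth⟩ := hp
  have hW := integrableOn_W_ball hα hγ
  have hW₁ := integrableOn_W_ball (by linarith : -1 < α + 1) hγ
  have hG (Q : MvPolynomial (Fin d) ℝ) : ipForm hW (oneSubNormSq * P) Q = ipForm hW₁ P Q :=
    ipForm_oneSubNormSq_mul P Q
  obtain ⟨F, hFdeg, hForth, hrest⟩ := MvPolynomial.exists_orthogonal_decomposition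
    ipForm_self_nonneg ipForm_isSymm ipForm_negVars (fun Q hQ => (hG Q).trans (hPorth Q hQ))
    fun Q => (hG _).trans <| MvPolynomial.apply_parityPart_succ_eq_zero ipForm_self_nonneg
      ipForm_isSymm ipForm_negVars hPdeg hPorth Q
  refine ⟨evalP F, evalP (oneSubNormSq * P - F), memV_evalP hFdeg hForth,
    memV_evalP ((MvPolynomial.totalDegree_sub _ _).trans
      (max_le (totalDegree_oneSubNormSq_mul_le hPdeg) (by omega))) hrest, fun x => ?_⟩
  rw [show evalP (oneSubNormSq * P - F) x = evalP (oneSubNormSq * P) x - evalP F x by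
    simp [evalP], evalP_oneSubNormSq_mul]
  ring
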